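/- arXiv:2310.18124 — 6 statements merged into one kernel-verified Lean document; each statement's English description precedes it below -/
import Mathlib

section
/- Let F be a finitely generated group and let H be a subgroup of F of finite index. Then the set { φ(H) : φ ∈ Aut(F) } of images of H under all automorphisms of F is a finite set of subgroups of F. -/
/-!
A subgroup `K` of index `n` is the stabilizer of a point for the action of `F` on the `n`
cosets of `K`, that is, for some homomorphism `F →* Equiv.Perm (Fin n)`. When `F` is finitely
generated there are only finitely many such homomorphisms, so only finitely many subgroups of
index `n`. Automorphisms preserve the index, so all images of `H` lie in this finite set.
-/

open MulAction

theorem MonoidHom.finite_of_fg (G M : Type*) [Group G] [Group.FG G] [Monoid M] [Finite M] :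
    Finite (G →* M) := by
  obtain ⟨S, hS⟩ := Group.FG.out (G := G)
  refine Finite.of_injective (fun f : G →* M ↦ fun s : (S : Set G) ↦ f s) fun f g hfg ↦ ?_
  exact MonoidHom.eq_of_eqOn_dense hS fun x hx ↦ congrFun hfg ⟨x, hx⟩

namespace Subgroup

variable {F : Type*} [Group F]

theorem exists_eq_comap_stabilizer_perm_fin (K : Subgroup F) [K.FiniteIndex] :
    ∃ (φ : F →* Equiv.Perm (Fin K.index)) (x : Fin K.index),
      K = (stabilizer (Equiv.Perm (Fin K.index)) x).comap φ := by
  let e : F ⧸ K ≃ Fin K.index := Finite.equivFinOfCardEq rfl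
  refine ⟨e.permCongrHom.toMonoidHom.comp (toPermHom F (F ⧸ K)), e (1 : F), ?_⟩
  ext g
  conv_lhs => rw [← stabilizer_quotient K, mem_stabilizer_iff]
  simp [Equiv.permCongrHom, Equiv.permCongr_apply]

theorem finite_setOf_index_eq [Group.FG F] {n : ℕ} (hn : n ≠ 0) :
    {K : Subgroup F | K.index = n}.Finite := by
  have := MonoidHom.finite_of_fg F (Equiv.Perm (Fin n))
  refine (Set.finite_range fun p : (F →* Equiv.Perm (Fin n)) × Fin n ↦
    (stabilizer (Equiv.Perm (Fin n)) p.2).comap p.1).subset ?_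
  rintro K (rfl : K.index = n)
  have : K.FiniteIndex := ⟨hn⟩
  obtain ⟨φ, x, hK⟩ := K.exists_eq_comap_stabilizer_perm_fin
  exact ⟨(φ, x), hK.symm⟩

end Subgroup

/-- If `F` is a finitely generated group and `H` is a finite-index subgroup of `F`,
then the set of images of `H` under all automorphisms of `F` is finite. -/
theorem stmt1 (F : Type) [Group F] [Group.FG F] (H : Subgroup F) [H.FiniteIndex] :
    {K : Subgroup F | ∃ φ : MulAut F, K = Subgroup.map φ.toMonoidHom H}.Finite := by
  refine (Subgroup.finite_setOf_index_eq H.index_ne_zero_of_finite).subset ?_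
  rintro K ⟨φ, rfl⟩
  exact H.index_map_equiv φ
end

section
/- Let G be a finite group such that for every prime p and every Sylow p-subgroup P of G, the Bogomolov multiplier B₀(P) is trivial. Then the Bogomolov multiplier B₀(G) is trivial. -/
open CategoryTheory groupCohomology

/-- The additive group `ℚ/ℤ`. -/
abbrev QModZ : Type := ℚ ⧸ AddSubgroup.zmultiples (1 : ℚ)

/-- The trivial representation of a group `K` on `ℚ/ℤ` (with `ℤ` coefficients). -/
noncomputable abbrev trivQModZ (K : Type) [Group K] : Rep ℤ K := Rep.trivial ℤ K QModZ

variable {K : Type} [Group K]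

/-- Restriction of 2-cocycles of the trivial `K`-representation `ℚ/ℤ` to a subgroup
`A ≤ K`. -/
noncomputable def resTwoCocycles (A : Subgroup K) :
    cocycles₂ (trivQModZ K) →ₗ[ℤ] cocycles₂ (trivQModZ A) :=
  LinearMap.codRestrict (cocycles₂ (trivQModZ A))
    ((LinearMap.funLeft ℤ QModZ fun p : ↥A × ↥A => ((p.1 : K), (p.2 : K))).comp
      (cocycles₂ (trivQModZ K)).subtype)
    (fun f => by
      rw [mem_cocycles₂_def]
      intro g h j
      have hf := (mem_cocycles₂_def ((cocycles₂ (trivQModZ K)).subtype f)).mp f.2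
        (g : K) (h : K) (j : K)
      simpa [LinearMap.funLeft] using hf)

/-- Restriction on second group cohomology (in its explicit model
`H2 = twoCocycles ⧸ twoCoboundaries`) of the trivial representation `ℚ/ℤ`, from a group
`K` to a subgroup `A ≤ K`. -/
noncomputable def resH2 (A : Subgroup K) :
    (shortComplexH2 (trivQModZ K)).moduleCatLeftHomologyData.H →ₗ[ℤ]
      (shortComplexH2 (trivQModZ A)).moduleCatLeftHomologyData.H :=
  Submodule.mapQ _ _ (resTwoCocycles A) (by
    intro f hf
    obtain ⟨x, hx⟩ := hf
    change K → QModZ at x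
    refine ⟨fun a => x (a : K), ?_⟩
    apply Subtype.ext
    funext ⟨g, h⟩
    have hx' := congrFun (congrArg Subtype.val hx) ((g : K), (h : K))
    change (d₁₂ (trivQModZ A)).hom (fun a => x (a : K)) (g, h) = f.1 ((g : K), (h : K))
    change (d₁₂ (trivQModZ K)).hom x ((g : K), (h : K)) = f.1 ((g : K), (h : K)) at hx'
    rw [← hx', d₁₂_hom_apply, d₁₂_hom_apply]
    simp)

/-- Restriction on second group cohomology (Mathlib's `groupCohomology` in degree 2)
of the trivial representation `ℚ/ℤ`, from a group `K` to a subgroup `A ≤ K`: the map in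
cohomology induced by the inclusion `A → K` together with restriction of the trivial
representation. -/
noncomputable def resGroupCohomology₂ (A : Subgroup K) :
    groupCohomology (trivQModZ K) 2 ⟶ groupCohomology (trivQModZ A) 2 :=
  (H2Iso (trivQModZ K)).hom ≫ ModuleCat.ofHom (resH2 A) ≫ (H2Iso (trivQModZ A)).inv

/-- The homomorphism `H²(K, ℚ/ℤ) → Π_A H²(A, ℚ/ℤ)`, the product being over all abelian
subgroups `A` of `K`, whose components are the restriction maps. -/
noncomputable def totalRes (K : Type) [Group K] :
    groupCohomology (trivQModZ K) 2 →+
      ∀ A : {A : Subgroup K // IsMulCommutative A}, groupCohomology (trivQModZ A.1) 2 :=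
  AddMonoidHom.mk' (fun x A => resGroupCohomology₂ A.1 x)
    (fun a b => funext fun A => map_add (resGroupCohomology₂ A.1).hom a b)

/-- The Bogomolov multiplier `B₀(K)`: the kernel of the restriction homomorphism
`H²(K, ℚ/ℤ) → Π_A H²(A, ℚ/ℤ)`, where `A` runs over the abelian subgroups of `K`. -/
noncomputable def BogomolovMultiplier (K : Type) [Group K] :
    AddSubgroup (groupCohomology (trivQModZ K) 2) :=
  (totalRes K).ker

/-! Restriction to any subgroup `H` maps `B₀(G)` into `B₀(H)`, since abelian subgroups of `H`
are abelian subgroups of `G`. For a Sylow subgroup `P` the restriction of `x ∈ B₀(G)` is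
therefore zero, and corestriction after restriction, which is multiplication by the index,
shows `[G : P] • x = 0`. The Sylow indices have no common prime divisor, so `x = 0`. -/

universe u w

section TrivialCoefficients

variable {k G : Type u} {M : Type w} [CommRing k] [Group G] [AddCommGroup M] [Module k M]

theorem mem_cocycles₂_trivial_iff (f : G × G → M) :
    f ∈ cocycles₂ (Rep.trivial k G M) ↔
      ∀ g h j : G, f (h, j) - f (g * h, j) + f (g, h * j) - f (g, h) = 0 := by
  simp [mem_cocycles₂_def]

theorem mem_coboundaries₂_trivial_iff (f : G × G → M) :
    f ∈ coboundaries₂ (Rep.trivial k G M) ↔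
      ∃ u : G → M, ∀ g h : G, u h - u (g * h) + u g = f (g, h) := by
  simp only [coboundaries₂, LinearMap.mem_range, funext_iff, Prod.forall]
  rfl

theorem comp_prodMap_mem_coboundaries₂ {H : Type u} [Group H] (φ : H →* G) {f : G × G → M}
    (hf : f ∈ coboundaries₂ (Rep.trivial k G M)) :
    f ∘ Prod.map φ φ ∈ coboundaries₂ (Rep.trivial k H M) := by
  obtain ⟨u, hu⟩ := (mem_coboundaries₂_trivial_iff f).1 hf
  exact (mem_coboundaries₂_trivial_iff _).2 ⟨u ∘ φ, fun g h => by simp [hu]⟩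

theorem transfer_cocycle_identity {f : G × G → M}
    (hf : ∀ g h j : G, f (h, j) - f (g * h, j) + f (g, h * j) - f (g, h) = 0)
    {g₁ g₂ s₁ s₂ s₃ a b : G} (h₁ : s₃ * a = g₁ * s₂) (h₂ : s₂ * b = g₂ * s₁) :
    f (a, b) - f (s₂, b) + f (g₂, s₁) + f (s₃, a * b) - f (g₁ * g₂, s₁) - f (s₃, a)
      + f (g₁, s₂) = f (g₁, g₂) := by
  have I₁ := hf s₃ a b
  have I₂ := hf g₁ s₂ b
  have I₃ := hf g₁ g₂ s₁
  rw [h₁] at I₁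
  rw [h₂] at I₂
  linear_combination (norm := abel) I₁ - I₂ + I₃

theorem out_smul_inv_mul_mem (H : Subgroup G) (g : G) (c : G ⧸ H) :
    (g • c).out⁻¹ * (g * c.out) ∈ H := by
  rw [← QuotientGroup.eq, QuotientGroup.out_eq', ← smul_eq_mul, ← MulAction.Quotient.smul_mk,
    QuotientGroup.out_eq']

/-- Corestriction of a primitive `u` of `f` on `H`: with the transversal `c ↦ c.out` and
`g * c.out = (g • c).out * γ g c`, the sum over cosets of
`u (γ g c) - f ((g • c).out, γ g c) + f (g, c.out)` is a primitive of `H.index • f`. -/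
theorem index_nsmul_mem_coboundaries₂ (H : Subgroup G) [H.FiniteIndex] {f : G × G → M}
    (hf : f ∈ cocycles₂ (Rep.trivial k G M))
    (hH : f ∘ Prod.map H.subtype H.subtype ∈ coboundaries₂ (Rep.trivial k H M)) :
    H.index • f ∈ coboundaries₂ (Rep.trivial k G M) := by
  have := H.fintypeQuotientOfFiniteIndex
  rw [mem_cocycles₂_trivial_iff] at hf
  obtain ⟨u, hu⟩ := (mem_coboundaries₂_trivial_iff _).1 hH
  let γ (g : G) (c : G ⧸ H) : H := ⟨_, out_smul_inv_mul_mem H g c⟩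
  have hγ (g₁ g₂ : G) (c : G ⧸ H) : γ (g₁ * g₂) c = γ g₁ (g₂ • c) * γ g₂ c := by
    ext
    simp only [γ, mul_smul, Subgroup.coe_mul]
    group
  let term (g : G) (c : G ⧸ H) : M := u (γ g c) - f ((g • c).out, γ g c) + f (g, c.out)
  have hterm (g₁ g₂ : G) (c : G ⧸ H) :
      term g₂ c - term (g₁ * g₂) c + term g₁ (g₂ • c) = f (g₁, g₂) := by
    have hu_c := hu (γ g₁ (g₂ • c)) (γ g₂ c)
    have hf_c := transfer_cocycle_identity hf (g₁ := g₁) (g₂ := g₂) (s₁ := c.out)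
      (s₂ := (g₂ • c).out) (s₃ := (g₁ • g₂ • c).out) (a := γ g₁ (g₂ • c)) (b := γ g₂ c)
      (by simp [γ]) (by simp [γ])
    simp only [Function.comp_apply, Prod.map, Subgroup.subtype_apply] at hu_c
    simp only [term, hγ, mul_smul]
    rw [← hf_c, ← hu_c]
    push_cast
    abel
  refine (mem_coboundaries₂_trivial_iff _).2 ⟨fun g => ∑ c, term g c, fun g₁ g₂ => ?_⟩
  calc ∑ c, term g₂ c - ∑ c, term (g₁ * g₂) c + ∑ c, term g₁ c
      = ∑ c, (term g₂ c - term (g₁ * g₂) c + term g₁ (g₂ • c)) := by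
        rw [← Fintype.sum_equiv (MulAction.toPerm g₂) (fun c => term g₁ (g₂ • c)) _ fun _ => rfl]
        simp only [Finset.sum_add_distrib, Finset.sum_sub_distrib]
    _ = ∑ _c : G ⧸ H, f (g₁, g₂) := Finset.sum_congr rfl fun c _ => hterm g₁ g₂ c
    _ = H.index • f (g₁, g₂) := by simp [Subgroup.index_eq_card]

end TrivialCoefficients

theorem eq_zero_of_forall_sylow_index_nsmul_eq_zero {G A : Type*} [Group G] [Finite G]
    [AddMonoid A] {x : A}
    (h : ∀ p : ℕ, p.Prime → ∀ P : Sylow p G, (P : Subgroup G).index • x = 0) : x = 0 := by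
  suffices addOrderOf x = 1 from AddMonoid.addOrderOf_eq_one_iff.1 this
  refine Nat.eq_one_iff_not_exists_prime_dvd.2 fun p hp hpx => ?_
  have := Fact.mk hp
  obtain ⟨P⟩ := (inferInstance : Nonempty (Sylow p G))
  exact P.not_dvd_index (hpx.trans (addOrderOf_dvd_of_nsmul_eq_zero (h p hp P)))

theorem H2Iso_hom_H2π (f : cocycles₂ (trivQModZ K)) :
    (H2Iso (trivQModZ K)).hom (H2π _ f) = Submodule.Quotient.mk f := by
  change (H2Iso _).hom (π _ 2 ((isoCocycles₂ _).inv f)) = _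
  rw [π_comp_H2Iso_hom_apply, Iso.inv_hom_id_apply]
  rfl

theorem resGroupCohomology₂_H2π (A : Subgroup K) (f : cocycles₂ (trivQModZ K)) :
    resGroupCohomology₂ A (H2π _ f) = H2π _ (resTwoCocycles A f) := by
  apply (H2Iso (trivQModZ A)).toLinearEquiv.injective
  change (H2Iso _).hom ((H2Iso _).inv (resH2 A ((H2Iso _).hom (H2π _ f)))) = _
  rw [Iso.inv_hom_id_apply, Iso.toLinearEquiv_apply, H2Iso_hom_H2π, H2Iso_hom_H2π]
  rfl

theorem resGroupCohomology₂_H2π_eq_zero_iff (A : Subgroup K) (f : cocycles₂ (trivQModZ K)) :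
    resGroupCohomology₂ A (H2π _ f) = 0 ↔
      ⇑f ∘ Prod.map A.subtype A.subtype ∈ coboundaries₂ (trivQModZ A) := by
  rw [resGroupCohomology₂_H2π, H2π_eq_zero_iff]
  rfl

theorem index_nsmul_eq_zero_of_resGroupCohomology₂_eq_zero (H : Subgroup K) [H.FiniteIndex]
    {x : groupCohomology (trivQModZ K) 2} (hx : resGroupCohomology₂ H x = 0) :
    H.index • x = 0 := by
  induction x using H2_induction_on with | h f =>
  rw [resGroupCohomology₂_H2π_eq_zero_iff] at hx
  rw [← map_nsmul, H2π_eq_zero_iff]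
  exact index_nsmul_mem_coboundaries₂ H f.2 hx

theorem mem_bogomolovMultiplier_iff {x : groupCohomology (trivQModZ K) 2} :
    x ∈ BogomolovMultiplier K ↔
      ∀ A : Subgroup K, IsMulCommutative A → resGroupCohomology₂ A x = 0 := by
  simp [BogomolovMultiplier, totalRes, funext_iff]

theorem resGroupCohomology₂_mem_bogomolovMultiplier (H : Subgroup K)
    {x : groupCohomology (trivQModZ K) 2} (hx : x ∈ BogomolovMultiplier K) :
    resGroupCohomology₂ H x ∈ BogomolovMultiplier H := by
  induction x using H2_induction_on with | h f =>
  rw [mem_bogomolovMultiplier_iff] at hx ⊢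
  intro B hB
  have hB' := (resGroupCohomology₂_H2π_eq_zero_iff _ f).1 (hx (B.map H.subtype) inferInstance)
  rw [resGroupCohomology₂_H2π, resGroupCohomology₂_H2π_eq_zero_iff]
  exact comp_prodMap_mem_coboundaries₂ (H.subtype.subgroupMap B) hB'

/-- If `G` is a finite group all of whose Sylow subgroups have trivial Bogomolov
multiplier, then `G` has trivial Bogomolov multiplier. -/
theorem stmt5 (G : Type) [Group G] [Finite G]
    (h : ∀ (p : ℕ), p.Prime → ∀ P : Sylow p G,
      BogomolovMultiplier ↥(P : Subgroup G) = ⊥) :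
    BogomolovMultiplier G = ⊥ := by
  refine (AddSubgroup.eq_bot_iff_forall _).2 fun x hx => ?_
  refine eq_zero_of_forall_sylow_index_nsmul_eq_zero (G := G) fun p hp P => ?_
  apply index_nsmul_eq_zero_of_resGroupCohomology₂_eq_zero
  rw [← AddSubgroup.mem_bot, ← h p hp P]
  exact resGroupCohomology₂_mem_bogomolovMultiplier _ hx
end

section
/- Let q < p be primes with q ≥ 3, and let r be an integer with 2 ≤ r < p and r^q ≡ 1 (mod p). Let G = ZMod p ⋊ ZMod q be the semidirect product in which the class of k ∈ ZMod q acts on the additive group ZMod p as multiplication by r^k (well defined since r^q ≡ 1 mod p), written multiplicatively, and set a = (1,0), b = (0,1), so that a has order p, b has order q and b·a·b⁻¹ = a^r. Then, with c = b⁻¹ and d = b·a⁻¹: (i) [a,b] = a^{1-r} ≠ 1, (ii) [a,b]·[c,d] = 1, and (iii) there exists a surjective group homomorphism θ from the genus-2 surface group F to G with θ(x1) = a, θ(y1) = b, θ(x2) = c, θ(y2) = d, and [x1,y1] ∉ ker(θ). -/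
/-! Since `b a b⁻¹ = a ^ r` commutes with `a`, the commutators `⁅a, b⁆ = a ^ (1 - r)` and
`⁅b⁻¹, b a⁻¹⁆ = a⁻¹ (b a b⁻¹) = a ^ (r - 1)` are mutually inverse, so `a, b, b⁻¹, b a⁻¹`
satisfy the surface relator. The induced map is onto because `a` and `b` generate
`ZMod p ⋊ ZMod q`, and `⁅a, b⁆ ≠ 1` because `0 < r - 1 < p = orderOf a`. -/

open scoped commutatorElement

/-- The single relator `[x₁,y₁]·[x₂,y₂]` of the genus-2 surface group, inside the free
group on four generators. -/
def surfaceRels : Set (FreeGroup (Fin 4)) :=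
  {⁅FreeGroup.of (0 : Fin 4), FreeGroup.of 1⁆ * ⁅FreeGroup.of (2 : Fin 4), FreeGroup.of 3⁆}

/-- The genus-2 surface group, presented on generators `x₁, y₁, x₂, y₂` with the single
relator `[x₁,y₁]·[x₂,y₂]`. -/
abbrev SurfaceGroup : Type := PresentedGroup surfaceRels

def x₁ : SurfaceGroup := PresentedGroup.of 0
def y₁ : SurfaceGroup := PresentedGroup.of 1
def x₂ : SurfaceGroup := PresentedGroup.of 2
def y₂ : SurfaceGroup := PresentedGroup.of 3

/-- The unit of `ZMod p` given by `r`, where `0 < r < p` and `p` is prime. -/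
def rUnit (p r : ℕ) (hp : p.Prime) (hr2 : 2 ≤ r) (hrp : r < p) : (ZMod p)ˣ :=
  ZMod.unitOfCoprime r
    (Nat.Coprime.symm ((Nat.Prime.coprime_iff_not_dvd hp).mpr
      (Nat.not_dvd_of_pos_of_lt (by omega) hrp)))

/-- The tautological monoid homomorphism `AddAut A →* MulAut (Multiplicative A)`. -/
def addAutToMulAut (A : Type) [AddZeroClass A] :
    Multiplicative (AddAut A) →* MulAut (Multiplicative A) where
  toFun e := AddEquiv.toMultiplicative e.toAdd
  map_one' := by ext x; rfl
  map_mul' a b := by ext x; rfl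

/-- The homomorphism `ZMod q → AddAut (ZMod p)` (written multiplicatively) sending the
class of `k` to multiplication by `r^k`; well defined because `r^q ≡ 1 (mod p)`. -/
noncomputable def actionHom (p q r : ℕ) (hp : p.Prime) (hr2 : 2 ≤ r) (hrp : r < p)
    (hmod : r ^ q ≡ 1 [MOD p]) :
    Multiplicative (ZMod q) →* MulAut (Multiplicative (ZMod p)) :=
  AddMonoidHom.toMultiplicativeLeft
    (ZMod.lift q ⟨zmultiplesHom _
      (Additive.ofMul (((addAutToMulAut (ZMod p)).comp AddAut.mulLeft)
        (rUnit p r hp hr2 hrp))), by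
      have hu : (rUnit p r hp hr2 hrp) ^ q = 1 := by
        apply Units.ext
        rw [Units.val_pow_eq_pow_val, Units.val_one]
        show ((ZMod.unitOfCoprime r _ : (ZMod p)ˣ) : ZMod p) ^ q = 1
        rw [ZMod.coe_unitOfCoprime, ← Nat.cast_pow]
        have := (ZMod.natCast_eq_natCast_iff (r ^ q) 1 p).mpr hmod
        simpa using this
      have hb : (((addAutToMulAut (ZMod p)).comp AddAut.mulLeft)
          (rUnit p r hp hr2 hrp)) ^ q = 1 := by
        rw [← map_pow, hu, map_one]
      rw [zmultiplesHom_apply, ← ofMul_zpow, zpow_natCast, hb]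
      rfl⟩)

/-- The semidirect product `ZMod p ⋊ ZMod q` (written multiplicatively), in which the
class of `k ∈ ZMod q` acts on `ZMod p` as multiplication by `r^k`. -/
noncomputable abbrev Gpqr (p q r : ℕ) (hp : p.Prime) (hr2 : 2 ≤ r) (hrp : r < p)
    (hmod : r ^ q ≡ 1 [MOD p]) : Type :=
  Multiplicative (ZMod p) ⋊[actionHom p q r hp hr2 hrp hmod] Multiplicative (ZMod q)

section Commutators

variable {G : Type*} [Group G] {a b : G}

theorem commutatorElement_eq_zpow_of_conj_eq_pow {r : ℕ} (h : b * a * b⁻¹ = a ^ r) :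
    ⁅a, b⁆ = a ^ ((1 : ℤ) - r) := by
  have hinv : b * a⁻¹ * b⁻¹ = a ^ (-(r : ℤ)) := by
    rw [zpow_neg, zpow_natCast, ← h]; group
  calc ⁅a, b⁆ = a * (b * a⁻¹ * b⁻¹) := by group
    _ = a ^ ((1 : ℤ) - r) := by rw [hinv, sub_eq_add_neg, zpow_add, zpow_one]

theorem commutatorElement_mul_commutatorElement_inv_eq_one (h : Commute a (b * a * b⁻¹)) :
    ⁅a, b⁆ * ⁅b⁻¹, b * a⁻¹⁆ = 1 := by
  calc ⁅a, b⁆ * ⁅b⁻¹, b * a⁻¹⁆ = a * ((b * a * b⁻¹)⁻¹ * a⁻¹) * (b * a * b⁻¹) := by group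
    _ = 1 := by rw [← h.inv_inv.eq]; group

theorem zpow_one_sub_ne_one {r : ℕ} (hr : 2 ≤ r) (hra : r ≤ orderOf a) :
    a ^ ((1 : ℤ) - r) ≠ 1 := by
  have : (1 : ℤ) - r = -((r - 1 : ℕ) : ℤ) := by omega
  rw [this, zpow_neg, zpow_natCast, inv_ne_one]
  exact pow_ne_one_of_lt_orderOf (by omega) (by omega)

end Commutators

namespace SurfaceGroup

variable {G : Type*} [Group G] {a b c d : G}

theorem relator_lift_eq_one (h : ⁅a, b⁆ * ⁅c, d⁆ = 1) :
    ∀ w ∈ surfaceRels, FreeGroup.lift ![a, b, c, d] w = 1 := by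
  rintro _ rfl
  simpa [map_commutatorElement] using h

def lift (h : ⁅a, b⁆ * ⁅c, d⁆ = 1) : SurfaceGroup →* G :=
  PresentedGroup.toGroup (relator_lift_eq_one h)

variable (h : ⁅a, b⁆ * ⁅c, d⁆ = 1)

@[simp] theorem lift_x₁ : lift h x₁ = a := PresentedGroup.toGroup.of _
@[simp] theorem lift_y₁ : lift h y₁ = b := PresentedGroup.toGroup.of _
@[simp] theorem lift_x₂ : lift h x₂ = c := PresentedGroup.toGroup.of _
@[simp] theorem lift_y₂ : lift h y₂ = d := PresentedGroup.toGroup.of _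

end SurfaceGroup

theorem ZMod.mem_zpowers_ofAdd_one {n : ℕ} (x : Multiplicative (ZMod n)) :
    x ∈ Subgroup.zpowers (Multiplicative.ofAdd 1) :=
  ⟨ZMod.cast x.toAdd, by
    simp only [← ofAdd_zsmul, zsmul_one, ZMod.intCast_zmod_cast, ofAdd_toAdd]⟩

theorem SemidirectProduct.eq_top_of_ofAdd_one_mem {m n : ℕ}
    {φ : Multiplicative (ZMod m) →* MulAut (Multiplicative (ZMod n))}
    {K : Subgroup (Multiplicative (ZMod n) ⋊[φ] Multiplicative (ZMod m))}
    (hl : inl (.ofAdd 1) ∈ K) (hr : inr (.ofAdd 1) ∈ K) : K = ⊤ := by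
  refine eq_top_iff.2 fun x _ => ?_
  rw [← inl_left_mul_inr_right x]
  obtain ⟨k, hk⟩ := ZMod.mem_zpowers_ofAdd_one x.left
  obtain ⟨l, hl'⟩ := ZMod.mem_zpowers_ofAdd_one x.right
  rw [← hk, ← hl', map_zpow, map_zpow]
  exact mul_mem (zpow_mem hl k) (zpow_mem hr l)

section Gpqr

variable {p q r : ℕ} {hp : p.Prime} {hr2 : 2 ≤ r} {hrp : r < p} {hmod : r ^ q ≡ 1 [MOD p]}

theorem actionHom_ofAdd_one_apply (x : Multiplicative (ZMod p)) :
    actionHom p q r hp hr2 hrp hmod (.ofAdd 1) x = x ^ r := by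
  rw [actionHom, AddMonoidHom.toMultiplicativeLeft_apply_apply, toAdd_ofAdd, ← Int.cast_one,
    ZMod.lift_coe]
  show Multiplicative.ofAdd ((r : ZMod p) * x.toAdd) = x ^ r
  rw [← nsmul_eq_mul, ofAdd_nsmul, ofAdd_toAdd]

theorem Gpqr.conj_inl (x : Multiplicative (ZMod p)) :
    (SemidirectProduct.inr (.ofAdd 1) * SemidirectProduct.inl x *
      (SemidirectProduct.inr (.ofAdd 1))⁻¹ : Gpqr p q r hp hr2 hrp hmod) =
      SemidirectProduct.inl x ^ r := by
  rw [← map_inv, ← SemidirectProduct.inl_aut, actionHom_ofAdd_one_apply, map_pow]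

end Gpqr

theorem stmt7_general (p q r : ℕ) (hp : p.Prime)
    (hr2 : 2 ≤ r) (hrp : r < p) (hmod : r ^ q ≡ 1 [MOD p]) :
    ∀ a b : Gpqr p q r hp hr2 hrp hmod,
      a = SemidirectProduct.inl (Multiplicative.ofAdd (1 : ZMod p)) →
      b = SemidirectProduct.inr (Multiplicative.ofAdd (1 : ZMod q)) →
      ∀ c d : Gpqr p q r hp hr2 hrp hmod, c = b⁻¹ → d = b * a⁻¹ →
      (orderOf a = p ∧ orderOf b = q ∧ b * a * b⁻¹ = a ^ r) ∧
      (⁅a, b⁆ = a ^ ((1 : ℤ) - (r : ℤ)) ∧ ⁅a, b⁆ ≠ 1) ∧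
      ⁅a, b⁆ * ⁅c, d⁆ = 1 ∧
      ∃ θ : SurfaceGroup →* Gpqr p q r hp hr2 hrp hmod,
        Function.Surjective θ ∧
        θ x₁ = a ∧ θ y₁ = b ∧ θ x₂ = c ∧ θ y₂ = d ∧ ⁅x₁, y₁⁆ ∉ θ.ker := by
  intro a b ha hb c d hc hd
  subst hc hd
  have hoa : orderOf a = p := by
    rw [ha, orderOf_injective _ SemidirectProduct.inl_injective, orderOf_ofAdd_eq_addOrderOf,
      ZMod.addOrderOf_one]
  have hob : orderOf b = q := by
    rw [hb, orderOf_injective _ SemidirectProduct.inr_injective, orderOf_ofAdd_eq_addOrderOf,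
      ZMod.addOrderOf_one]
  have hconj : b * a * b⁻¹ = a ^ r := ha ▸ hb ▸ Gpqr.conj_inl _
  have hab := commutatorElement_eq_zpow_of_conj_eq_pow hconj
  have hab_ne : ⁅a, b⁆ ≠ 1 := hab ▸ zpow_one_sub_ne_one hr2 (hoa.symm ▸ hrp.le)
  have hrel : ⁅a, b⁆ * ⁅b⁻¹, b * a⁻¹⁆ = 1 :=
    commutatorElement_mul_commutatorElement_inv_eq_one (hconj ▸ Commute.self_pow a r)
  refine ⟨⟨hoa, hob, hconj⟩, ⟨hab, hab_ne⟩, hrel, SurfaceGroup.lift hrel, ?_,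
    by simp, by simp, by simp, by simp, ?_⟩
  · exact MonoidHom.range_eq_top.1 <|
      SemidirectProduct.eq_top_of_ofAdd_one_mem ⟨x₁, by simp [ha]⟩ ⟨y₁, by simp [hb]⟩
  · simpa [map_commutatorElement] using hab_ne

/-- for primes `q < p` with `q ≥ 3` and `2 ≤ r < p` with `r^q ≡ 1 (mod p)`,
in `G = ZMod p ⋊ ZMod q` with `a = (1,0)`, `b = (0,1)`, `c = b⁻¹`, `d = b·a⁻¹`:
`a` has order `p`, `b` has order `q`, `b·a·b⁻¹ = a^r`, `[a,b] = a^{1-r} ≠ 1`,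
`[a,b]·[c,d] = 1`, and there is a surjective homomorphism `θ` from the genus-2 surface
group onto `G` with `θ(x₁) = a`, `θ(y₁) = b`, `θ(x₂) = c`, `θ(y₂) = d` and
`[x₁,y₁] ∉ ker θ`. -/
theorem stmt7 (p q r : ℕ) (hq : q.Prime) (hp : p.Prime) (hq3 : 3 ≤ q) (hqp : q < p)
    (hr2 : 2 ≤ r) (hrp : r < p) (hmod : r ^ q ≡ 1 [MOD p]) :
    ∀ a b : Gpqr p q r hp hr2 hrp hmod,
      a = SemidirectProduct.inl (Multiplicative.ofAdd (1 : ZMod p)) →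
      b = SemidirectProduct.inr (Multiplicative.ofAdd (1 : ZMod q)) →
      ∀ c d : Gpqr p q r hp hr2 hrp hmod, c = b⁻¹ → d = b * a⁻¹ →
      (orderOf a = p ∧ orderOf b = q ∧ b * a * b⁻¹ = a ^ r) ∧
      (⁅a, b⁆ = a ^ ((1 : ℤ) - (r : ℤ)) ∧ ⁅a, b⁆ ≠ 1) ∧
      ⁅a, b⁆ * ⁅c, d⁆ = 1 ∧
      ∃ θ : SurfaceGroup →* Gpqr p q r hp hr2 hrp hmod,
        Function.Surjective θ ∧
        θ x₁ = a ∧ θ y₁ = b ∧ θ x₂ = c ∧ θ y₂ = d ∧ ⁅x₁, y₁⁆ ∉ θ.ker :=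
  stmt7_general p q r hp hr2 hrp hmod
end

section
/- Let p be a prime and r an integer with 2 ≤ r ≤ p − 1. Let G be a group containing elements a and b such that a has order exactly p and b·a·b⁻¹ = a^r. Then the element E = (b·a⁻¹)·b³·[a,b]·b⁻²·a·b⁻² of G equals the identity if and only if r³ ≡ 1 (mod p). (Here E is the image, under the substitution x1 ↦ a, y1 ↦ b, x2 ↦ b⁻¹, y2 ↦ b·a⁻¹, of the word σ₅(σ₄(σ₃([x1,y1]))) = y2·x2⁻²·y1·[x1,y1]·x2²·y2⁻¹·y1⁻¹.) -/
open scoped commutatorElement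

/-!
Conjugation by `b` acts on `⟨a⟩` as `x ↦ x ^ r`, so regrouping `E` as a product of conjugates
`b ^ k * a ^ (±1) * b ^ (-k)` collapses it to `a ^ (-r (r - 1) (r ^ 3 - 1))`. Since `0 < r - 1 < r < p`,
the prime `p = orderOf a` is coprime to `r (r - 1)`, so `E = 1` exactly when `p ∣ r ^ 3 - 1`.
-/

theorem conj_pow_zpow_eq_zpow_mul_pow {G : Type*} [Group G] {a b : G} {r : ℤ}
    (hab : b * a * b⁻¹ = a ^ r) (n : ℕ) (m : ℤ) :
    b ^ n * a ^ m * (b ^ n)⁻¹ = a ^ (m * r ^ n) := by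
  induction n generalizing m with
  | zero => simp
  | succ k ih =>
    calc b ^ (k + 1) * a ^ m * (b ^ (k + 1))⁻¹
        = b ^ k * (b * a * b⁻¹) ^ m * (b ^ k)⁻¹ := by rw [conj_zpow]; group
      _ = a ^ (m * r ^ (k + 1)) := by rw [hab, ← zpow_mul, ih]; ring_nf

theorem word_eq_zpow {G : Type*} [Group G] {a b : G} {r : ℤ}
    (hab : b * a * b⁻¹ = a ^ r) :
    (b * a⁻¹) * b ^ (3 : ℕ) * ⁅a, b⁆ * b ^ (-2 : ℤ) * a * b ^ (-2 : ℤ) =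
      a ^ (-(r * (r - 1) * (r ^ 3 - 1))) := by
  have as_conjugates : (b * a⁻¹) * b ^ (3 : ℕ) * ⁅a, b⁆ * b ^ (-2 : ℤ) * a * b ^ (-2 : ℤ)
      = (b ^ 1 * a ^ (-1 : ℤ) * (b ^ 1)⁻¹) * (b ^ 4 * a ^ (1 : ℤ) * (b ^ 4)⁻¹)
        * (b ^ 5 * a ^ (-1 : ℤ) * (b ^ 5)⁻¹) * (b ^ 2 * a ^ (1 : ℤ) * (b ^ 2)⁻¹) := by
    rw [commutatorElement_def]
    group
  simp only [as_conjugates, conj_pow_zpow_eq_zpow_mul_pow hab, ← zpow_add]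
  ring_nf

theorem Int.isCoprime_of_prime_of_pos_of_lt {p : ℕ} (hp : p.Prime) {s : ℤ} (hs : 0 < s)
    (hsp : s < p) : IsCoprime (p : ℤ) s :=
  (Nat.prime_iff_prime_int.mp hp).coprime_iff_not_dvd.mpr fun hdvd =>
    hs.ne' (Int.eq_zero_of_dvd_of_nonneg_of_lt hs.le hsp hdvd)

/-- Let `p` be prime, `2 ≤ r ≤ p - 1`, and let `a, b` be elements of a group `G` with
`a` of order exactly `p` and `b·a·b⁻¹ = a^r`.  Then
`E = (b·a⁻¹)·b³·[a,b]·b⁻²·a·b⁻²` equals the identity iff `r³ ≡ 1 (mod p)`. -/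
theorem stmt8 (G : Type) [Group G] (p r : ℕ) (hp : p.Prime)
    (hr2 : 2 ≤ r) (hrp : r ≤ p - 1) (a b : G)
    (ha : orderOf a = p) (hab : b * a * b⁻¹ = a ^ r) :
    (b * a⁻¹) * b ^ (3 : ℕ) * ⁅a, b⁆ * b ^ (-2 : ℤ) * a * b ^ (-2 : ℤ) = 1 ↔
      (p : ℤ) ∣ (r : ℤ) ^ 3 - 1 := by
  rw [← zpow_natCast] at hab
  rw [word_eq_zpow hab, ← orderOf_dvd_iff_zpow_eq_one, ha, dvd_neg]
  have hcop : IsCoprime (p : ℤ) (r * (r - 1)) :=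
    (Int.isCoprime_of_prime_of_pos_of_lt hp (by omega) (by omega)).mul_right
      (Int.isCoprime_of_prime_of_pos_of_lt hp (by omega) (by omega))
  exact ⟨hcop.dvd_of_dvd_mul_left, fun h => h.mul_left _⟩
end

section
/- A finite group G contains two distinct elements of order two if and only if G contains a subgroup isomorphic to the dihedral group of order 2n for some n ≥ 2. -/
/-!
Two distinct involutions `a`, `b` generate a dihedral group: `a` inverts `x = a * b` by
conjugation, so `r i ↦ x ^ i`, `sr i ↦ a * x ^ i` is a homomorphism from the dihedral group of
order `2 * orderOf x`. It is injective because `a ∉ ⟨x⟩`: otherwise `a` would commute with `x`,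
forcing `x ^ 2 = 1`, and then `a ∈ {1, a * b}`, which is absurd. Conversely, `sr 0` and `sr 1`
are distinct involutions of `DihedralGroup n` for `n ≠ 1`.
-/

open Subgroup Function

namespace DihedralGroup

variable {G : Type*} [Group G] {n : ℕ}

def lift (ρ : Multiplicative (ZMod n) →* G) (s : G) (hs : s * s = 1)
    (hsρ : ∀ i, s * ρ i * s = (ρ i)⁻¹) : DihedralGroup n →* G where
  toFun
    | r i => ρ (.ofAdd i)
    | sr i => s * ρ (.ofAdd i)
  map_one' := ρ.map_one
  map_mul' := by
    rintro (i | i) (j | j) <;>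
      simp only [r_mul_r, r_mul_sr, sr_mul_r, sr_mul_sr, sub_eq_neg_add, ofAdd_add, ofAdd_neg,
        map_mul, map_inv, ← hsρ] <;>
      simp only [← mul_assoc, hs, one_mul]

theorem lift_injective {ρ : Multiplicative (ZMod n) →* G} {s : G} {hs : s * s = 1}
    {hsρ : ∀ i, s * ρ i * s = (ρ i)⁻¹} (hρ : Injective ρ) (hsr : s ∉ ρ.range) :
    Injective (lift ρ s hs hsρ) := by
  rw [injective_iff_map_eq_one]
  rintro (i | i) h
  · exact congrArg r (hρ (h.trans ρ.map_one.symm))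
  · refine absurd ⟨(Multiplicative.ofAdd i)⁻¹, ?_⟩ hsr
    rw [map_inv]
    exact (eq_inv_of_mul_eq_one_left h).symm

theorem exists_ne_orderOf_eq_two (hn : n ≠ 1) :
    ∃ g h : DihedralGroup n, g ≠ h ∧ orderOf g = 2 ∧ orderOf h = 2 := by
  have : Nontrivial (ZMod n) := ZMod.nontrivial_iff.mpr hn
  exact ⟨sr 0, sr 1, by simp, orderOf_sr 0, orderOf_sr 1⟩

end DihedralGroup

section

variable {G : Type*} [Group G]

noncomputable def zmodPowersHom (x : G) : Multiplicative (ZMod (orderOf x)) →* G :=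
  (zpowers x).subtype.comp
    (zmodMulEquivOfGenerator (g := ⟨x, mem_zpowers x⟩)
      (by rintro ⟨_, k, rfl⟩; exact ⟨k, Subtype.ext (by simp)⟩) (Nat.card_zpowers x)).toMonoidHom

theorem zmodPowersHom_injective (x : G) : Injective (zmodPowersHom x) :=
  (zpowers x).subtype_injective.comp (MulEquiv.injective _)

theorem range_zmodPowersHom_le (x : G) : (zmodPowersHom x).range ≤ zpowers x := by
  rintro _ ⟨i, rfl⟩
  exact Subtype.prop _

theorem conj_eq_inv_of_mem_zpowers {s x y : G} (hsx : s * x * s⁻¹ = x⁻¹) (hy : y ∈ zpowers x) :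
    s * y * s⁻¹ = y⁻¹ := by
  obtain ⟨k, rfl⟩ := mem_zpowers_iff.mp hy
  rw [← conj_zpow, hsx, inv_zpow]

theorem eq_one_or_eq_of_mem_zpowers {x y : G} (hx : x ^ 2 = 1) (hy : y ∈ zpowers x) :
    y = 1 ∨ y = x := by
  obtain ⟨k, rfl⟩ := mem_zpowers_iff.mp hy
  obtain ⟨m, rfl | rfl⟩ := Int.even_or_odd' k
  · simp [zpow_mul, hx]
  · simp [zpow_add_one, zpow_mul, hx]

theorem mul_self_eq_one_of_orderOf_eq_two {a : G} (ha : orderOf a = 2) : a * a = 1 := by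
  rw [← sq, ← ha, pow_orderOf_eq_one]

theorem notMem_zpowers_mul_of_orderOf_eq_two {a b : G} (ha : orderOf a = 2) (hb : orderOf b = 2)
    (hab : a ≠ b) : a ∉ zpowers (a * b) := by
  intro h
  have hcomm : Commute a (a * b) := by
    obtain ⟨k, hk⟩ := mem_zpowers_iff.mp h
    have := (Commute.refl (a * b)).zpow_left k
    rwa [hk] at this
  have hsq : (a * b) ^ 2 = 1 :=
    calc (a * b) ^ 2 = a * b * a * b := by rw [sq, ← mul_assoc]
      _ = a * (a * b) * b := by rw [hcomm.eq]
      _ = 1 := by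
        rw [← mul_assoc, mul_self_eq_one_of_orderOf_eq_two ha, one_mul,
          mul_self_eq_one_of_orderOf_eq_two hb]
  have hmul := mul_notMem_of_orderOf_eq_two ha hb hab
  rcases eq_one_or_eq_of_mem_zpowers hsq h with rfl | hx
  · simp at ha
  · exact hmul (by simp [← hx])

theorem exists_dihedralGroup_embedding_of_orderOf_eq_two {a b : G} (ha : orderOf a = 2)
    (hb : orderOf b = 2) (hab : a ≠ b) :
    ∃ f : DihedralGroup (orderOf (a * b)) →* G, Injective f := by
  have hinv : a * (a * b) * a⁻¹ = (a * b)⁻¹ := by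
    rw [mul_inv_rev, inv_eq_self_of_orderOf_eq_two ha, inv_eq_self_of_orderOf_eq_two hb,
      ← mul_assoc, mul_self_eq_one_of_orderOf_eq_two ha, one_mul]
  have hconj (i) : a * zmodPowersHom (a * b) i * a = (zmodPowersHom (a * b) i)⁻¹ := by
    simpa only [inv_eq_self_of_orderOf_eq_two ha] using
      conj_eq_inv_of_mem_zpowers hinv (range_zmodPowersHom_le _ ⟨i, rfl⟩)
  exact ⟨DihedralGroup.lift _ a (mul_self_eq_one_of_orderOf_eq_two ha) hconj,
    DihedralGroup.lift_injective (zmodPowersHom_injective _)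
      fun h => notMem_zpowers_mul_of_orderOf_eq_two ha hb hab (range_zmodPowersHom_le _ h)⟩

end

/-- A finite group contains two distinct elements of order two if and only if it
contains a subgroup isomorphic to a dihedral group of order `2n` for some `n ≥ 2`. -/
theorem stmt11 (G : Type) [Group G] [Finite G] :
    (∃ g h : G, g ≠ h ∧ orderOf g = 2 ∧ orderOf h = 2) ↔
      ∃ n : ℕ, 2 ≤ n ∧ ∃ H : Subgroup G, Nonempty (H ≃* DihedralGroup n) := by
  constructor
  · rintro ⟨a, b, hab, ha, hb⟩
    obtain ⟨f, hf⟩ := exists_dihedralGroup_embedding_of_orderOf_eq_two ha hb hab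
    have hn : 1 < orderOf (a * b) := Nat.one_lt_iff_ne_zero_and_ne_one.mpr
      ⟨(orderOf_pos _).ne', fun h => mul_notMem_of_orderOf_eq_two ha hb hab
        (by simp [orderOf_eq_one_iff.mp h])⟩
    exact ⟨_, hn, f.range, ⟨(MonoidHom.ofInjective hf).symm⟩⟩
  · rintro ⟨n, hn, H, ⟨e⟩⟩
    obtain ⟨g, h, hgh, hg, hh⟩ := DihedralGroup.exists_ne_orderOf_eq_two (n := n) (by omega)
    let f := H.subtype.comp e.symm.toMonoidHom
    have hf : Injective f := H.subtype_injective.comp e.symm.injective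
    exact ⟨f g, f h, hf.ne hgh, (orderOf_injective f hf g).trans hg,
      (orderOf_injective f hf h).trans hh⟩
end

section
/- Let F be the genus-2 surface group with generators x1, y1, x2, y2, let G be a finite group of odd order, and let θ : F → G be a surjective group homomorphism with [x1,y1] ∉ ker(θ). Let N be the intersection, over all φ ∈ Aut(F), of the images φ(ker θ). Then: (i) N is a normal subgroup of F of finite index that is invariant under every automorphism of F; (ii) the quotient group G_N = F/N is a finite group of odd order; and (iii) for every φ ∈ Aut(F), the element φ([x1,y1]) does not lie in N. -/
/-!
The core `N = ⋂_φ φ(ker θ)` is characteristic by construction. Since `φ(ker θ) = ker (θ ∘ φ⁻¹)`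
and the surface group is finitely generated, only finitely many distinct kernels occur, so `F/N`
embeds into a finite power `G^S`, whose order is odd. Finally `N ≤ φ(ker θ)`, and `φ([x₁,y₁])`
lies there only if `[x₁,y₁] ∈ ker θ`.
-/

open scoped commutatorElement

instance PresentedGroup.finite_monoidHom {α : Type*} [Finite α] {rels : Set (FreeGroup α)}
    {G : Type*} [Group G] [Finite G] : Finite (PresentedGroup rels →* G) :=
  .of_injective (fun f => f ∘ PresentedGroup.of) fun _ _ h => PresentedGroup.ext (congrFun h)

namespace Subgroup

variable {H G : Type*} [Group H] [Group G]

theorem characteristic_iInf_map_mulAut (K : Subgroup H) :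
    (⨅ φ : MulAut H, K.map φ.toMonoidHom).Characteristic := by
  refine characteristic_iff_map_le.mpr fun ψ => le_iInf fun φ => ?_
  calc (⨅ χ : MulAut H, K.map χ.toMonoidHom).map ψ.toMonoidHom
      ≤ (K.map (ψ⁻¹ * φ).toMonoidHom).map ψ.toMonoidHom := map_mono (iInf_le _ _)
    _ = K.map φ.toMonoidHom := by rw [map_map]; congr 1; ext; simp

theorem map_ker_mulEquiv {K : Type*} [Group K] (θ : H →* G) (φ : H ≃* K) :
    θ.ker.map φ.toMonoidHom = (θ.comp φ.symm.toMonoidHom).ker := by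
  rw [map_equiv_eq_comap_symm', MonoidHom.comap_ker]

theorem iInf_ker_eq_ker_pi_range {ι : Type*} (f : ι → H →* G) :
    ⨅ i, (f i).ker = (MonoidHom.pi fun g : Set.range f => (g : H →* G)).ker := by
  rw [← iInf_range' (fun g : H →* G => g.ker) f]
  ext x
  simp [mem_iInf, funext_iff]

variable [Finite (H →* G)] {ι : Type*} (f : ι → H →* G)

theorem finite_quotient_iInf_ker [Finite G] : Finite (H ⧸ ⨅ i, (f i).ker) := by
  rw [iInf_ker_eq_ker_pi_range]
  exact .of_injective _ (QuotientGroup.kerLift_injective _)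

theorem odd_card_quotient_iInf_ker (hodd : Odd (Nat.card G)) :
    Odd (Nat.card (H ⧸ ⨅ i, (f i).ker)) := by
  rw [iInf_ker_eq_ker_pi_range]
  refine Odd.of_dvd_nat ?_ (card_dvd_of_injective _ (QuotientGroup.kerLift_injective _))
  rw [Nat.card_fun]
  exact hodd.pow

end Subgroup

theorem stmt12_general (G : Type) [Group G] [Finite G] (hodd : Odd (Nat.card G))
    (θ : SurfaceGroup →* G)
    (hker : ⁅x₁, y₁⁆ ∉ θ.ker)
    (N : Subgroup SurfaceGroup)
    (hN : N = ⨅ φ : MulAut SurfaceGroup, Subgroup.map φ.toMonoidHom θ.ker) :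
    (N.Normal ∧ N.FiniteIndex ∧
      ∀ φ : MulAut SurfaceGroup, Subgroup.map φ.toMonoidHom N = N) ∧
    (Finite (SurfaceGroup ⧸ N) ∧ Odd (Nat.card (SurfaceGroup ⧸ N))) ∧
    (∀ φ : MulAut SurfaceGroup, φ ⁅x₁, y₁⁆ ∉ N) := by
  have hchar : N.Characteristic := hN ▸ Subgroup.characteristic_iInf_map_mulAut θ.ker
  have hkers : N = ⨅ φ : MulAut SurfaceGroup, (θ.comp φ.symm.toMonoidHom).ker := by
    simp only [hN, Subgroup.map_ker_mulEquiv]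
  have hfin : Finite (SurfaceGroup ⧸ N) := hkers ▸ Subgroup.finite_quotient_iInf_ker _
  refine ⟨⟨inferInstance, Subgroup.finiteIndex_of_finite_quotient,
    Subgroup.characteristic_iff_map_eq.mp hchar⟩,
    ⟨hfin, hkers ▸ Subgroup.odd_card_quotient_iInf_ker _ hodd⟩, fun φ hφ => hker ?_⟩
  have hNle : N ≤ θ.ker.map φ.toMonoidHom := hN ▸ iInf_le _ φ
  exact (Subgroup.mem_map_iff_mem φ.injective).mp (hNle hφ)

/-- Let `θ` be a surjective homomorphism from the genus-2 surface group `F` onto a finite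
group `G` of odd order with `[x₁,y₁] ∉ ker θ`, and let `N = ⋂_{φ ∈ Aut F} φ(ker θ)`.
Then (i) `N` is a finite-index normal subgroup of `F` invariant under every automorphism
of `F`; (ii) the quotient `F/N` is a finite group of odd order; and (iii) for every
automorphism `φ` of `F`, the element `φ([x₁,y₁])` does not lie in `N`. -/
theorem stmt12 (G : Type) [Group G] [Finite G] (hodd : Odd (Nat.card G))
    (θ : SurfaceGroup →* G) (hsurj : Function.Surjective θ)
    (hker : ⁅x₁, y₁⁆ ∉ θ.ker)
    (N : Subgroup SurfaceGroup)
    (hN : N = ⨅ φ : MulAut SurfaceGroup, Subgroup.map φ.toMonoidHom θ.ker) :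
    (N.Normal ∧ N.FiniteIndex ∧
      ∀ φ : MulAut SurfaceGroup, Subgroup.map φ.toMonoidHom N = N) ∧
    (Finite (SurfaceGroup ⧸ N) ∧ Odd (Nat.card (SurfaceGroup ⧸ N))) ∧
    (∀ φ : MulAut SurfaceGroup, φ ⁅x₁, y₁⁆ ∉ N) :=
  stmt12_general G hodd θ hker N hN
end
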